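/- arXiv:1109.2539 — 2 statements merged into one kernel-verified Lean document; each statement's English description precedes it below -/
import Mathlib

section
/- For 1 ≤ k ≤ N and admissible parameters, k(2a+k)·p_{k,N}(a,b,c) = [(a+b)(a+c)N/(b+c-N)] · p_{k-1,N-1}(a+1,b,c). -/
/-!
Under `(x)_{n+1} = x (x+1)_n`, each Pochhammer symbol of `p_{k,N}(a,b,c)` other than `(2a)_k`,
`(2a+1)_N` and `(-b-c+1)_N` loses its first factor and becomes the matching symbol of
`p_{k-1,N-1}(a+1,b,c)`; `(-b-c+1)_N` loses its last factor `N-b-c`, and the two remaining ones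
are shifted by `(x)_n (x+n) = x (x+1)_n`, which brings in `2a+k` and `2a+N+1`. The ratio of the
two weights is thus a product of linear factors that cancels down to the claimed one. The factors
cancelled are nonzero since they divide the denominator products; in particular
`(2a+1)_N (2a+N+1)_k = (2a+1)_{N+k}` contains `2a+1`, `2a+2`, `2a+k` and `2a+N+1`.
-/

/-- Pochhammer symbol `(a)_k = a(a+1)⋯(a+k-1)`. -/
noncomputable def poch (a : ℝ) (k : ℕ) : ℝ := ∏ i ∈ Finset.range k, (a + i)

/-- Normalizing constant `C_N(a,b,c)` of Wilson's 6-j weights. -/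
noncomputable def wC (N : ℕ) (a b c : ℝ) : ℝ :=
  poch (a - b + 1) N * poch (a - c + 1) N / (poch (2*a + 1) N * poch (-b - c + 1) N)

/-- Wilson's 6-j weight `p_{k,N}(a,b,c)`. -/
noncomputable def wp (k N : ℕ) (a b c : ℝ) : ℝ :=
  wC N a b c *
    (poch (2*a) k * poch (a + 1) k * poch (a + b) k * poch (a + c) k * poch (-(N : ℝ)) k /
      ((k.factorial : ℝ) * poch a k * poch (a - b + 1) k * poch (a - c + 1) k *
        poch (2*a + N + 1) k))

/-- The product of all Pochhammer factors appearing in denominators of `wp k N a b c`. -/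
noncomputable def wpden (k N : ℕ) (a b c : ℝ) : ℝ :=
  poch (2*a + 1) N * poch (-b - c + 1) N * poch a k * poch (a - b + 1) k *
    poch (a - c + 1) k * poch (2*a + N + 1) k

lemma poch_succ_right (x : ℝ) (n : ℕ) : poch x (n + 1) = poch x n * (x + n) :=
  Finset.prod_range_succ _ _

lemma poch_succ_left (x : ℝ) (n : ℕ) : poch x (n + 1) = x * poch (x + 1) n := by
  simp only [poch, Finset.prod_range_succ', Nat.cast_add, Nat.cast_one, Nat.cast_zero, add_zero]
  rw [mul_comm]
  congr 1
  exact Finset.prod_congr rfl fun i _ => by ring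

lemma poch_add (x : ℝ) (m n : ℕ) : poch x (m + n) = poch x m * poch (x + m) n := by
  simp only [poch, Finset.prod_range_add, Nat.cast_add, add_assoc]

lemma poch_eq_mul_poch_add_one_div {x : ℝ} {n : ℕ} (h : x + n ≠ 0) :
    poch x n = x * poch (x + 1) n / (x + n) := by
  rw [eq_div_iff h, ← poch_succ_left, poch_succ_right]

lemma add_ne_zero_of_poch_ne_zero {x : ℝ} {n : ℕ} (h : poch x n ≠ 0) {i : ℕ} (hi : i < n) :
    x + i ≠ 0 :=
  fun h0 => h (Finset.prod_eq_zero (Finset.mem_range.2 hi) h0)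

lemma ne_zero_of_poch_succ_ne_zero {x : ℝ} {n : ℕ} (h : poch x (n + 1) ≠ 0) : x ≠ 0 := by
  simpa using add_ne_zero_of_poch_ne_zero h n.succ_pos

lemma wC_succ (M : ℕ) (a b c : ℝ) (h : 2 * a + 2 + M ≠ 0) :
    wC (M + 1) a b c = (a - b + 1) * (a - c + 1) * (2 * a + 2 + M) /
      ((2 * a + 1) * (2 * a + 2) * (-b - c + 1 + M)) * wC M (a + 1) b c := by
  have hshift : poch (2 * a + 2) M = (2 * a + 2) * poch (2 * (a + 1) + 1) M / (2 * a + 2 + M) := by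
    rw [poch_eq_mul_poch_add_one_div h]; ring_nf
  simp only [wC, poch_succ_left (a - b + 1), poch_succ_left (a - c + 1),
    poch_succ_left (2 * a + 1), poch_succ_right (-b - c + 1)]
  rw [show 2 * a + 1 + 1 = 2 * a + 2 by ring, hshift]
  -- `ring` treats the inverse of a product of sums as one atom, so inverses are split first
  simp only [div_eq_mul_inv, mul_inv, inv_inv]
  ring_nf

noncomputable def wpTerm (k N : ℕ) (a b c : ℝ) : ℝ :=
  poch (2*a) k * poch (a + 1) k * poch (a + b) k * poch (a + c) k * poch (-(N : ℝ)) k /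
    ((k.factorial : ℝ) * poch a k * poch (a - b + 1) k * poch (a - c + 1) k *
      poch (2*a + N + 1) k)

lemma wp_eq_wC_mul_wpTerm (k N : ℕ) (a b c : ℝ) :
    wp k N a b c = wC N a b c * wpTerm k N a b c :=
  rfl

lemma wpTerm_succ (m M : ℕ) (a b c : ℝ) (h : 2 * a + 1 + m ≠ 0) :
    wpTerm (m + 1) (M + 1) a b c =
      2 * a * (a + 1) * (a + b) * (a + c) * (-(M + 1)) * (2 * a + 1) /
        ((m + 1) * a * (a - b + 1) * (a - c + 1) * (2 * a + 2 + M) * (2 * a + 1 + m)) *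
      wpTerm m M (a + 1) b c := by
  simp only [wpTerm, poch_succ_left, Nat.factorial_succ, poch_eq_mul_poch_add_one_div h]
  push_cast
  simp only [div_eq_mul_inv, mul_inv]
  ring_nf

lemma two_mul_add_one_add_ne_zero_of_wpden_ne_zero {k N : ℕ} {a b c : ℝ}
    (h : wpden k N a b c ≠ 0) {i : ℕ} (hi : i < N + k) : 2 * a + 1 + i ≠ 0 := by
  simp only [wpden, mul_ne_zero_iff] at h
  refine add_ne_zero_of_poch_ne_zero ?_ hi
  rw [poch_add, add_right_comm]
  exact mul_ne_zero h.1.1.1.1.1 h.2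

theorem wilson_step_one_general (k N : ℕ) (a b c : ℝ) (hk : 1 ≤ k) (hkN : k ≤ N)
    (h1 : wpden k N a b c ≠ 0) :
    (k : ℝ) * (2*a + k) * wp k N a b c
      = (a + b) * (a + c) * N / (b + c - N) * wp (k - 1) (N - 1) (a + 1) b c := by
  obtain ⟨m, rfl⟩ : ∃ m, k = m + 1 := ⟨k - 1, by omega⟩
  obtain ⟨M, rfl⟩ : ∃ M, N = M + 1 := ⟨N - 1, by omega⟩
  have hfac : ∀ i < M + 1 + (m + 1), 2 * a + 1 + (i : ℝ) ≠ 0 := fun _ =>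
    two_mul_add_one_add_ne_zero_of_wpden_ne_zero h1
  have h0 : 2 * a + 1 ≠ 0 := by simpa using hfac 0 (by omega)
  have hm := hfac m (by omega)
  have ha1 : a + 1 ≠ 0 := fun h => hfac 1 (by omega) (by push_cast; linear_combination 2 * h)
  have hM : 2 * (a + 1) + M ≠ 0 := fun h =>
    hfac (M + 1) (by omega) (by push_cast; linear_combination h)
  simp only [wpden, mul_ne_zero_iff] at h1
  obtain ⟨⟨⟨⟨⟨-, hbc⟩, ha⟩, hab⟩, hac⟩, -⟩ := h1
  have hbc' : -b - c + 1 + M ≠ 0 := add_ne_zero_of_poch_ne_zero hbc M.lt_succ_self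
  have hbc'' : b + c - (M + 1) ≠ 0 := fun h => hbc' (by linear_combination -h)
  have ha₀ := ne_zero_of_poch_succ_ne_zero ha
  have hab₀ := ne_zero_of_poch_succ_ne_zero hab
  have hac₀ := ne_zero_of_poch_succ_ne_zero hac
  push_cast
  rw [wp_eq_wC_mul_wpTerm, wp_eq_wC_mul_wpTerm, wpTerm_succ _ _ _ _ _ hm,
    wC_succ _ _ _ _ fun h => hM (by linear_combination h)]
  field_simp
  ring

theorem wilson_step_one (k N : ℕ) (a b c : ℝ) (hk : 1 ≤ k) (hkN : k ≤ N)
    (h1 : wpden k N a b c ≠ 0) (h2 : wpden (k - 1) (N - 1) (a + 1) b c ≠ 0)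
    (h3 : b + c - N ≠ 0) :
    (k : ℝ) * (2*a + k) * wp k N a b c
      = (a + b) * (a + c) * N / (b + c - N) * wp (k - 1) (N - 1) (a + 1) b c :=
  wilson_step_one_general k N a b c hk hkN h1
end

section
/- Under Case 1 or Case 2 assumptions, for s < t in the time interval and 0 ≤ k ≤ n ≤ N, the parameters a = A+k+t/2, b = -A-k-s+t/2, c = C-t/2 of the transition probabilities p_{s,t}(k,n) = p_{n-k,N-k}(A+t/2+k, -A-s+t/2-k, C-t/2), with n-k in place of n and N-k in place of N, satisfy condition (A1): a > -1/2, b ∈ (-a, a+1), and c > a+(N-k) or c < -a-(N-k)+1; in particular the transition probabilities p_{s,t}(k,n) are nonnegative. -/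
lemma poch_pos {a : ℝ} (ha : 0 < a) (k : ℕ) : 0 < poch a k := by
  refine Finset.prod_pos fun i _ => ?_
  have : (0:ℝ) ≤ i := Nat.cast_nonneg i
  linarith

lemma poch_alt {a : ℝ} {k : ℕ} (h : ∀ i : ℕ, i < k → a + i < 0) :
    0 < (-1)^k * poch a k := by
  have h1 : ∏ i ∈ Finset.range k, (-(a + (i:ℝ))) = (-1)^k * poch a k := by
    calc ∏ i ∈ Finset.range k, (-(a + (i:ℝ)))
        = ∏ i ∈ Finset.range k, ((-1) * (a + (i:ℝ))) :=
          Finset.prod_congr rfl fun i _ => (neg_one_mul _).symm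
      _ = (∏ _i ∈ Finset.range k, (-1:ℝ)) * ∏ i ∈ Finset.range k, (a + (i:ℝ)) :=
          Finset.prod_mul_distrib
      _ = (-1)^k * poch a k := by rw [Finset.prod_const, Finset.card_range, poch]
  rw [← h1]
  refine Finset.prod_pos fun i hi => ?_
  have := h i (Finset.mem_range.mp hi)
  linarith

lemma pair_pos {x y : ℝ} {k : ℕ} (hx : 0 < (-1)^k * x) (hy : 0 < (-1)^k * y) :
    0 < x * y := by
  have h := mul_pos hx hy
  have hsq : ((-1:ℝ)^k) * ((-1:ℝ)^k) = 1 := by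
    rw [← pow_add, ← two_mul, pow_mul]; norm_num
  have e : ((-1:ℝ)^k * x) * ((-1)^k * y) = x * y := by
    rw [mul_mul_mul_comm, hsq, one_mul]
  rwa [e] at h

lemma poch_succ (a : ℝ) (m : ℕ) : poch a (m+1) = a * poch (a+1) m := by
  unfold poch
  rw [Finset.prod_range_succ']
  simp only [Nat.cast_zero, add_zero, Nat.cast_add, Nat.cast_one]
  rw [mul_comm]
  congr 1
  exact Finset.prod_congr rfl fun i _ => by ring

lemma poch_two_mul_nonneg {a : ℝ} (ha : -1/2 < a) (m : ℕ) :
    0 ≤ poch (2*a) m * poch a m := by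
  cases m with
  | zero => simp [poch]
  | succ m =>
    rw [poch_succ, poch_succ]
    have p1 : 0 < poch (2*a+1) m := poch_pos (by linarith) m
    have p2 : 0 < poch (a+1) m := poch_pos (by linarith) m
    nlinarith [mul_pos p1 p2, sq_nonneg a]

lemma div_nonneg_of_mul_nonneg' {x y : ℝ} (h : 0 ≤ x * y) : 0 ≤ x / y := by
  rcases eq_or_ne y 0 with rfl | hy
  · simp
  · have e : x / y = x * y / (y * y) := by rw [mul_div_mul_right _ _ hy]
    rw [e]; exact div_nonneg h (mul_self_nonneg y)

lemma wp_nonneg (m M : ℕ) (a b c : ℝ) (ha : -1/2 < a) (hb1 : -a < b) (hb2 : b < a+1)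
    (hmM : m ≤ M) (hc : a + M < c ∨ c < -a - M + 1) : 0 ≤ wp m M a b c := by
  rcases Nat.eq_zero_or_pos M with rfl | hMpos
  · obtain rfl : m = 0 := Nat.le_zero.mp hmM
    simp [wp, wC, poch]
  have hM1 : (1:ℝ) ≤ M := by exact_mod_cast hMpos
  have hmMr : (m:ℝ) ≤ M := by exact_mod_cast hmM
  have castlt : ∀ i : ℕ, i < M → (i:ℝ) + 1 ≤ M := fun i hi => by exact_mod_cast hi
  have hM0 : (0:ℝ) ≤ M := by linarith
  have p1 : 0 < poch (a - b + 1) M := poch_pos (by linarith) M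
  have p2 : 0 < poch (2*a + 1) M := poch_pos (by linarith) M
  have p3 : 0 < poch (a + 1) m := poch_pos (by linarith) m
  have p4 : 0 < poch (a + b) m := poch_pos (by linarith) m
  have p5 : 0 < poch (a - b + 1) m := poch_pos (by linarith) m
  have p6 : 0 < poch (2*a + ↑M + 1) m := poch_pos (by linarith) m
  have pf : 0 < ((m.factorial : ℝ)) := by positivity
  have pM : 0 < (-1)^m * poch (-(M:ℝ)) m := by
    apply poch_alt; intro i hi
    have h2 : (i:ℝ) + 1 ≤ m := by exact_mod_cast hi
    linarith
  have paa := poch_two_mul_nonneg ha m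
  rw [wp, wC, div_mul_div_comm]
  apply div_nonneg_of_mul_nonneg'
  rcases hc with hc | hc
  · have q1 : 0 < poch (a + c) m := poch_pos (by linarith) m
    have nM1 : 0 < (-1)^M * poch (a - c + 1) M := poch_alt fun i hi => by
      have := castlt i hi; linarith
    have nM2 : 0 < (-1)^M * poch (-b - c + 1) M := poch_alt fun i hi => by
      have := castlt i hi; linarith
    have nm1 : 0 < (-1)^m * poch (a - c + 1) m := poch_alt fun i hi => by
      have h2 := castlt i (lt_of_lt_of_le hi hmM); linarith
    have pairM : 0 < poch (a - c + 1) M * poch (-b - c + 1) M := pair_pos nM1 nM2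
    have pairm : 0 < poch (a - c + 1) m * poch (-(M:ℝ)) m := pair_pos nm1 pM
    have hP : 0 < poch (a - c + 1) M * poch (-b - c + 1) M *
        (poch (a - c + 1) m * poch (-(M:ℝ)) m *
          (poch (a + c) m * (poch (a - b + 1) M * (poch (2*a + 1) M *
            (poch (a + 1) m * (poch (a + b) m * (poch (a - b + 1) m *
              (poch (2*a + ↑M + 1) m * (m.factorial : ℝ))))))))) :=
      mul_pos pairM (mul_pos pairm (mul_pos q1 (mul_pos p1 (mul_pos p2
        (mul_pos p3 (mul_pos p4 (mul_pos p5 (mul_pos p6 pf))))))))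
    exact (mul_nonneg paa hP.le).trans_eq (by ring)
  · have q1 : 0 < poch (a - c + 1) M := poch_pos (by linarith) M
    have q2 : 0 < poch (a - c + 1) m := poch_pos (by linarith) m
    have q3 : 0 < poch (-b - c + 1) M := poch_pos (by linarith) M
    have nm : 0 < (-1)^m * poch (a + c) m := poch_alt fun i hi => by
      have h2 := castlt i (lt_of_lt_of_le hi hmM); linarith
    have pairm : 0 < poch (a + c) m * poch (-(M:ℝ)) m := pair_pos nm pM
    have hP : 0 < poch (a + c) m * poch (-(M:ℝ)) m *
        (poch (a - c + 1) M * (poch (a - c + 1) m * (poch (-b - c + 1) M *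
          (poch (a - b + 1) M * (poch (2*a + 1) M *
            (poch (a + 1) m * (poch (a + b) m * (poch (a - b + 1) m *
              (poch (2*a + ↑M + 1) m * (m.factorial : ℝ)))))))))) :=
      mul_pos pairm (mul_pos q1 (mul_pos q2 (mul_pos q3 (mul_pos p1 (mul_pos p2
        (mul_pos p3 (mul_pos p4 (mul_pos p5 (mul_pos p6 pf)))))))))
    exact (mul_nonneg paa hP.le).trans_eq (by ring)

theorem transition_parameters_admissible (N : ℕ) (A B C : ℝ) (s t : ℝ) (k n : ℕ)
    (hN : 1 ≤ N) (hA : A > -1/2) (hB1 : -A < B) (hB2 : B < A + 1)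
    (hcase : (C < -A - N + 1 ∧ -(A + B) < s) ∨
             (C > A + N ∧ -(A + B) < s ∧ t < C - A - N))
    (hst : s < t) (hkn : k ≤ n) (hnN : n ≤ N) :
    (A + k + t/2 > -1/2) ∧
    (-(A + k + t/2) < -A - k - s + t/2 ∧ -A - k - s + t/2 < (A + k + t/2) + 1) ∧
    (C - t/2 > (A + k + t/2) + ((N : ℝ) - k) ∨
      C - t/2 < -(A + k + t/2) - ((N : ℝ) - k) + 1) ∧
    0 ≤ wp (n - k) (N - k) (A + t/2 + k) (-A - s + t/2 - k) (C - t/2) := by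
  have hkN : k ≤ N := hkn.trans hnN
  have hk0 : (0:ℝ) ≤ k := Nat.cast_nonneg k
  have hs : -(A+B) < s := by rcases hcase with ⟨_, h⟩ | ⟨_, h, _⟩ <;> exact h
  refine ⟨by linarith, ⟨by linarith, by linarith⟩, ?_, ?_⟩
  · rcases hcase with ⟨h1, _⟩ | ⟨_, _, h3⟩
    · right; linarith
    · left; linarith
  · apply wp_nonneg
    · linarith
    · linarith
    · linarith
    · exact Nat.sub_le_sub_right hnN k
    · rw [Nat.cast_sub hkN]
      rcases hcase with ⟨h1, _⟩ | ⟨_, _, h3⟩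
      · right; linarith
      · left; linarith
end
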